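/- The compacting operator is multiplicative for the shifted concatenation: for all lists l₁, l₂ ∈ L one has cpt(l₁ ∗̄ l₂) = cpt(l₁) ∗̄ cpt(l₂). -/

import Mathlib

open scoped TensorProduct

/-- A monomial: a nonzero finitely supported multi-index with support contained in `{1,2,…}`. -/
def Mon : Type := {m : ℕ →₀ ℕ // m ≠ 0 ∧ m 0 = 0}

namespace Mon

/-- Product of monomials: pointwise addition of multi-indices. -/
noncomputable instance : Mul Mon :=
  ⟨fun a b =>
    ⟨a.1 + b.1, by
      constructor
      · intro h
        exact a.2.1 ((add_eq_zero.mp h).1)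
      · simp [Finsupp.add_apply, a.2.2, b.2.2]⟩⟩

/-- The total degree (weight) of a monomial. -/
def w (m : Mon) : ℕ := m.1.sum fun _ v => v

/-- The set of variable indices occurring in a list of monomials. -/
def IndAlph (l : List Mon) : Finset ℕ := (l.map fun m => m.1.support).foldr (· ∪ ·) ∅

/-- The maximal variable index occurring in a list of monomials (`0` for the empty list). -/
def maxInd (l : List Mon) : ℕ := (IndAlph l).sup id

/-- The embedding `i ↦ i + p` of `ℕ` into itself. -/
def addEmb (p : ℕ) : ℕ ↪ ℕ := ⟨fun i => i + p, fun a b h => by simpa using h⟩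

/-- The shift `T_p` of a monomial: translate the support by `p`. -/
noncomputable def Tmon (p : ℕ) (m : Mon) : Mon :=
  ⟨m.1.embDomain (addEmb p), by
    refine ⟨fun h => m.2.1 (Finsupp.embDomain_eq_zero.mp h), ?_⟩
    by_cases hp : p = 0
    · subst hp
      have h0 : (Finsupp.embDomain (addEmb 0) m.1) ((addEmb 0) 0) = m.1 0 :=
        Finsupp.embDomain_apply_self _ _ _
      simpa [addEmb] using h0.trans m.2.2
    · apply Finsupp.embDomain_of_notMem_range
      rintro ⟨i, hi⟩
      have hi' : i + p = 0 := hi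
      omega⟩

/-- Shifted concatenation of lists of monomials. -/
noncomputable def sconc (l₁ l₂ : List Mon) : List Mon := l₁ ++ l₂.map (Tmon (maxInd l₁))

/-- A list of monomials is compact when its alphabet has no holes:
`IndAlph l = {1,…,card (IndAlph l)}`. -/
def Compact (l : List Mon) : Prop := IndAlph l = Finset.Icc 1 (IndAlph l).card

/-- The re-indexing function of a list `l` : on `IndAlph l` it is the unique strictly
increasing bijection onto `{1,…,card (IndAlph l)}` (extended injectively elsewhere). -/
noncomputable def phi (l : List Mon) (i : ℕ) : ℕ :=
  if h : i ∈ IndAlph l then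
    (((IndAlph l).orderIsoOfFin rfl).symm ⟨i, h⟩ : Fin (IndAlph l).card) + 1
  else i + (IndAlph l).card + 1

lemma phi_pos (l : List Mon) (i : ℕ) : 1 ≤ phi l i := by
  unfold phi; split_ifs <;> omega

lemma phi_inj (l : List Mon) : Function.Injective (phi l) := by
  intro a b hab
  unfold phi at hab
  split_ifs at hab with ha hb hb
  · have h1 : (((IndAlph l).orderIsoOfFin rfl).symm ⟨a, ha⟩) =
        (((IndAlph l).orderIsoOfFin rfl).symm ⟨b, hb⟩) := Fin.ext (by omega)
    have h2 := congrArg ((IndAlph l).orderIsoOfFin rfl) h1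
    rw [OrderIso.apply_symm_apply, OrderIso.apply_symm_apply] at h2
    exact congrArg Subtype.val h2
  · have := (((IndAlph l).orderIsoOfFin rfl).symm ⟨a, ha⟩).isLt; omega
  · have := (((IndAlph l).orderIsoOfFin rfl).symm ⟨b, hb⟩).isLt; omega
  · omega

/-- Action of the compacting operator of `l` on a single monomial. -/
noncomputable def cptMon (l : List Mon) (m : Mon) : Mon :=
  ⟨m.1.mapDomain (phi l), by
    constructor
    · intro h
      apply m.2.1
      exact Finsupp.mapDomain_injective (phi_inj l) (by simpa using h)
    · apply Finsupp.mapDomain_of_notMem_range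
      rintro ⟨i, hi⟩
      have := phi_pos l i
      omega⟩

/-- The compacting operator on lists of monomials. -/
noncomputable def cpt (l : List Mon) : List Mon := l.map (cptMon l)

/-- `sub l I` is the sublist of `l` consisting of the entries whose (1-based) position
belongs to `I`. -/
def sub (l : List Mon) (I : Finset ℕ) : List Mon :=
  (List.range l.length).filterMap fun j => if j + 1 ∈ I then l[j]? else none

/-- `∗̄`-irreducible lists: nonempty and with no factorization into two nonempty lists. -/
def SIrred (l : List Mon) : Prop :=
  l ≠ [] ∧ ∀ u v : List Mon, l = sconc u v → u = [] ∨ v = []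

end Mon

/-!
On its alphabet, `phi l i` is one more than the number of letters of `l` below `i`. The
alphabet of `l₁ ∗̄ l₂` is that of `l₁` followed by a copy of that of `l₂` translated past
`maxInd l₁`. Below a letter of `l₁` one therefore counts only letters of `l₁`, and below a
translated letter of `l₂` all `card (IndAlph l₁) = maxInd (cpt l₁)` letters of `l₁` plus the
letters of `l₂` below the original one: this is exactly the shift in `cpt l₁ ∗̄ cpt l₂`.
-/

open Finset

theorem Finset.coe_orderIsoOfFin_symm_eq_card_filter_lt {α : Type*} [LinearOrder α]
    {s : Finset α} {x : α} (hx : x ∈ s) :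
    (((s.orderIsoOfFin rfl).symm ⟨x, hx⟩ : Fin #s) : ℕ) = #{y ∈ s | y < x} := by
  have emb_symm (y : α) (hy : y ∈ s) :
      s.orderEmbOfFin rfl ((s.orderIsoOfFin rfl).symm ⟨y, hy⟩) = y := by
    rw [← coe_orderIsoOfFin_apply, OrderIso.apply_symm_apply]
  have filter_eq : {y ∈ s | y < x} =
      (Iio ((s.orderIsoOfFin rfl).symm ⟨x, hx⟩)).map (s.orderEmbOfFin rfl).toEmbedding := by
    ext y
    simp only [mem_filter, mem_map, mem_Iio, RelEmbedding.coe_toEmbedding]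
    constructor
    · rintro ⟨hy, hyx⟩
      refine ⟨(s.orderIsoOfFin rfl).symm ⟨y, hy⟩, ?_, emb_symm y hy⟩
      rwa [← (s.orderEmbOfFin rfl).lt_iff_lt, emb_symm, emb_symm]
    · rintro ⟨m, hm, rfl⟩
      exact ⟨orderEmbOfFin_mem _ _ _, emb_symm x hx ▸ (s.orderEmbOfFin rfl).strictMono hm⟩
  rw [filter_eq, card_map, Fin.card_Iio]

namespace Mon

lemma IndAlph_nil : IndAlph [] = ∅ := rfl

lemma IndAlph_cons (m : Mon) (l : List Mon) : IndAlph (m :: l) = m.1.support ∪ IndAlph l := rfl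

lemma IndAlph_append (l₁ l₂ : List Mon) : IndAlph (l₁ ++ l₂) = IndAlph l₁ ∪ IndAlph l₂ := by
  induction l₁ with
  | nil => simp [IndAlph_nil]
  | cons m l ih => rw [List.cons_append, IndAlph_cons, IndAlph_cons, ih, union_assoc]

lemma support_subset_IndAlph {l : List Mon} {m : Mon} (hm : m ∈ l) :
    m.1.support ⊆ IndAlph l := by
  induction l with
  | nil => simp at hm
  | cons a l ih =>
    rw [IndAlph_cons]
    rcases List.mem_cons.1 hm with rfl | hm
    · exact subset_union_left
    · exact (ih hm).trans subset_union_right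

lemma pos_of_mem_IndAlph {l : List Mon} {i : ℕ} (h : i ∈ IndAlph l) : 0 < i := by
  induction l with
  | nil => simp [IndAlph_nil] at h
  | cons m l ih =>
    rw [IndAlph_cons, mem_union] at h
    rcases h with h | h
    · exact Nat.pos_of_ne_zero fun hi => Finsupp.mem_support_iff.1 h (hi ▸ m.2.2)
    · exact ih h

lemma le_maxInd {l : List Mon} {i : ℕ} (h : i ∈ IndAlph l) : i ≤ maxInd l :=
  le_sup (f := id) h

@[simp]
lemma addEmb_apply (p i : ℕ) : addEmb p i = i + p := rfl

lemma Tmon_val (p : ℕ) (m : Mon) : (Tmon p m).1 = m.1.mapDomain (· + p) :=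
  Finsupp.embDomain_eq_mapDomain _ _

lemma IndAlph_map_Tmon (p : ℕ) (l : List Mon) :
    IndAlph (l.map (Tmon p)) = (IndAlph l).map (addEmb p) := by
  induction l with
  | nil => rfl
  | cons m l ih =>
    rw [List.map_cons, IndAlph_cons, IndAlph_cons, ih, map_union, Tmon,
      Finsupp.support_embDomain]

lemma IndAlph_sconc (l₁ l₂ : List Mon) :
    IndAlph (sconc l₁ l₂) = IndAlph l₁ ∪ (IndAlph l₂).map (addEmb (maxInd l₁)) := by
  rw [sconc, IndAlph_append, IndAlph_map_Tmon]

lemma lt_of_mem_IndAlph_of_mem_shift {l₁ l₂ : List Mon} {i j : ℕ} (hi : i ∈ IndAlph l₁)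
    (hj : j ∈ (IndAlph l₂).map (addEmb (maxInd l₁))) : i < j := by
  obtain ⟨k, hk, rfl⟩ := mem_map.1 hj
  have := pos_of_mem_IndAlph hk
  have := le_maxInd hi
  rw [addEmb_apply]
  omega

lemma phi_of_mem {l : List Mon} {i : ℕ} (h : i ∈ IndAlph l) :
    phi l i = #{j ∈ IndAlph l | j < i} + 1 := by
  rw [phi, dif_pos h, coe_orderIsoOfFin_symm_eq_card_filter_lt]

lemma phi_sconc_left {l₁ l₂ : List Mon} {i : ℕ} (h : i ∈ IndAlph l₁) :
    phi (sconc l₁ l₂) i = phi l₁ i := by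
  have hi : i ∈ IndAlph (sconc l₁ l₂) := by rw [IndAlph_sconc]; exact mem_union_left _ h
  have no_right : {j ∈ (IndAlph l₂).map (addEmb (maxInd l₁)) | j < i} = ∅ :=
    filter_false_of_mem fun _ hj => (lt_of_mem_IndAlph_of_mem_shift h hj).not_gt
  rw [phi_of_mem hi, phi_of_mem h, IndAlph_sconc, filter_union, no_right, union_empty]

lemma phi_sconc_right {l₁ l₂ : List Mon} {i : ℕ} (h : i ∈ IndAlph l₂) :
    phi (sconc l₁ l₂) (i + maxInd l₁) = phi l₂ i + #(IndAlph l₁) := by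
  have hi : i + maxInd l₁ ∈ IndAlph (sconc l₁ l₂) := by
    rw [IndAlph_sconc]; exact mem_union_right _ (mem_map_of_mem (addEmb _) h)
  have all_left : {j ∈ IndAlph l₁ | j < i + maxInd l₁} = IndAlph l₁ := by
    refine filter_true_of_mem fun j hj => ?_
    have := pos_of_mem_IndAlph h
    have := le_maxInd hj
    omega
  have shifted_right : {j ∈ (IndAlph l₂).map (addEmb (maxInd l₁)) | j < i + maxInd l₁} =
      {j ∈ IndAlph l₂ | j < i}.map (addEmb (maxInd l₁)) := by
    simp [filter_map, Function.comp_def]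
  have disj : Disjoint (IndAlph l₁) ({j ∈ IndAlph l₂ | j < i}.map (addEmb (maxInd l₁))) :=
    disjoint_left.2 fun j hj hj' =>
      lt_irrefl j (lt_of_mem_IndAlph_of_mem_shift hj (map_subset_map.2 (filter_subset _ _) hj'))
  rw [phi_of_mem hi, phi_of_mem h, IndAlph_sconc, filter_union, all_left, shifted_right,
    card_union_of_disjoint disj, card_map]
  omega

lemma cptMon_val (l : List Mon) (m : Mon) : (cptMon l m).1 = m.1.mapDomain (phi l) := rfl

lemma cptMon_sconc_left {l₁ l₂ : List Mon} {m : Mon} (hm : m ∈ l₁) :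
    cptMon (sconc l₁ l₂) m = cptMon l₁ m :=
  Subtype.ext <| Finsupp.mapDomain_congr fun _ hi =>
    phi_sconc_left (support_subset_IndAlph hm hi)

lemma cptMon_sconc_Tmon {l₁ l₂ : List Mon} {m : Mon} (hm : m ∈ l₂) :
    cptMon (sconc l₁ l₂) (Tmon (maxInd l₁) m) = Tmon #(IndAlph l₁) (cptMon l₂ m) := by
  apply Subtype.ext
  rw [cptMon_val, Tmon_val, Tmon_val, cptMon_val, ← Finsupp.mapDomain_comp,
    ← Finsupp.mapDomain_comp]
  exact Finsupp.mapDomain_congr fun _ hi => phi_sconc_right (support_subset_IndAlph hm hi)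

lemma support_cptMon (l : List Mon) (m : Mon) :
    (cptMon l m).1.support = m.1.support.image (phi l) := by
  rw [cptMon_val, Finsupp.mapDomain_support_of_injective (phi_inj l)]

lemma IndAlph_map_cptMon (l l' : List Mon) :
    IndAlph (l'.map (cptMon l)) = (IndAlph l').image (phi l) := by
  induction l' with
  | nil => rfl
  | cons m l' ih => rw [List.map_cons, IndAlph_cons, IndAlph_cons, ih, image_union, support_cptMon]

lemma IndAlph_cpt (l : List Mon) : IndAlph (cpt l) = Icc 1 #(IndAlph l) := by
  have maps_to : (IndAlph l).image (phi l) ⊆ Icc 1 #(IndAlph l) := by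
    intro j hj
    obtain ⟨i, hi, rfl⟩ := mem_image.1 hj
    have : #{k ∈ IndAlph l | k < i} < #(IndAlph l) :=
      card_lt_card (filter_ssubset.2 ⟨i, hi, lt_irrefl i⟩)
    rw [phi_of_mem hi, mem_Icc]
    omega
  rw [cpt, IndAlph_map_cptMon]
  refine eq_of_subset_of_card_le maps_to ?_
  rw [Nat.card_Icc, card_image_of_injective _ (phi_inj l)]
  omega

lemma maxInd_cpt (l : List Mon) : maxInd (cpt l) = #(IndAlph l) := by
  rw [maxInd, IndAlph_cpt]
  rcases Nat.eq_zero_or_pos #(IndAlph l) with h | h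
  · rw [h]; rfl
  · exact le_antisymm (Finset.sup_le fun j hj => (mem_Icc.1 hj).2)
      (le_sup (f := id) (mem_Icc.2 ⟨h, le_rfl⟩))

end Mon

/-- ** Statement 6 **: the compacting operator is multiplicative for the
shifted concatenation. -/
theorem cpt_sconc (l₁ l₂ : List Mon) :
    Mon.cpt (Mon.sconc l₁ l₂) = Mon.sconc (Mon.cpt l₁) (Mon.cpt l₂) := by
  rw [Mon.cpt, Mon.sconc, List.map_append, Mon.sconc, Mon.maxInd_cpt, Mon.cpt, Mon.cpt,
    List.map_map, List.map_map]
  congr 1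
  · exact List.map_congr_left fun _ hm => Mon.cptMon_sconc_left hm
  · exact List.map_congr_left fun _ hm => Mon.cptMon_sconc_Tmon hm
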